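/- The commute time κ(i,j) := H_{ij} + H_{ji} satisfies the spectral decomposition κ(i,j) = 2|E| · ∑_{k=2}^{n} (1/(1 − λ_k)) · ( v_{k,i}/√d_i − v_{k,j}/√d_j )². -/

import Mathlib

/-!
With `ψ_k := D^{-1/2} v_k`, the `ψ_k` are right eigenvectors of the transition matrix
`P = D⁻¹A` with eigenvalues `λ_k`. Lovász's formula
`H_ij = 2|E| ∑_{k ≠ 1} ψ_k(j) (ψ_k(j) - ψ_k(i)) / (1 - λ_k)` solves the first-step equations:
applying `I - P` cancels the factor `1 / (1 - λ_k)`, and completeness of the orthonormal basis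
gives `∑_{k ≠ 1} ψ_k(i) ψ_k(j) = -1 / 2|E|` for `i ≠ j`. The solution is unique: the difference
`g` of two solutions vanishes at `j` and is `P`-harmonic elsewhere, so `w = D^{1/2} g` satisfies
`⟨w, (I - B) w⟩ = ∑_k (1 - λ_k) ⟨w, v_k⟩² = 0`. The spectral gap forces `w ∥ v_1`, and `w_j = 0`
then forces `w = 0`. Adding `H_ij` and `H_ji` gives the commute time.
-/

open Finset Matrix

section Orthonormal

variable {ι : Type*} [Fintype ι] [DecidableEq ι] {v : ι → ι → ℝ}

theorem sum_mul_eq_ite_of_orthonormal_rows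
    (horth : ∀ k l, ∑ x, v k x * v l x = if k = l then (1 : ℝ) else 0) (i j : ι) :
    ∑ k, v k i * v k j = if i = j then 1 else 0 := by
  have hV : Matrix.of v * (Matrix.of v)ᵀ = 1 := by
    ext k l
    simpa [mul_apply, one_apply] using horth k l
  have hVT : (Matrix.of v)ᵀ * Matrix.of v = 1 := mul_eq_one_comm.mp hV
  simpa [mul_apply, one_apply, mul_comm] using congrFun₂ hVT i j

theorem eq_sum_dotProduct_smul_of_orthonormal
    (horth : ∀ k l, ∑ x, v k x * v l x = if k = l then (1 : ℝ) else 0) (w : ι → ℝ) :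
    w = ∑ l, (w ⬝ᵥ v l) • v l := by
  ext i
  simp only [Finset.sum_apply, Pi.smul_apply, smul_eq_mul, dotProduct, sum_mul, mul_assoc]
  rw [sum_comm]
  simp_rw [← mul_sum, sum_mul_eq_ite_of_orthonormal_rows horth]
  simp

variable {B : Matrix ι ι ℝ} {lam : ι → ℝ}

theorem dotProduct_sub_mulVec_eq_sum
    (horth : ∀ k l, ∑ x, v k x * v l x = if k = l then (1 : ℝ) else 0)
    (heig : ∀ k, B.mulVec (v k) = lam k • v k) (w : ι → ℝ) :
    w ⬝ᵥ (w - B *ᵥ w) = ∑ l, (1 - lam l) * (w ⬝ᵥ v l) ^ 2 := by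
  have hexp := eq_sum_dotProduct_smul_of_orthonormal horth w
  have hsub : w - B *ᵥ w = ∑ l, ((w ⬝ᵥ v l) * (1 - lam l)) • v l := by
    conv_lhs => rw [hexp]
    simp only [mulVec_sum, mulVec_smul, heig, ← sum_sub_distrib, smul_smul, ← sub_smul]
    congr! 2
    ring
  simp only [hsub, dotProduct_sum, dotProduct_smul, smul_eq_mul]
  congr! 1
  ring

theorem eq_dotProduct_smul_of_dotProduct_sub_mulVec_eq_zero
    (horth : ∀ k l, ∑ x, v k x * v l x = if k = l then (1 : ℝ) else 0)
    (heig : ∀ k, B.mulVec (v k) = lam k • v k) (hle : ∀ k, lam k ≤ 1)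
    {k₀ : ι} (hlt : ∀ k ≠ k₀, lam k < 1) {w : ι → ℝ} (hw : w ⬝ᵥ (w - B *ᵥ w) = 0) :
    w = (w ⬝ᵥ v k₀) • v k₀ := by
  rw [dotProduct_sub_mulVec_eq_sum horth heig] at hw
  have hcoeff : ∀ l ≠ k₀, w ⬝ᵥ v l = 0 := fun l hl => by
    have hterm := (sum_eq_zero_iff_of_nonneg fun l _ =>
      mul_nonneg (sub_nonneg.2 (hle l)) (sq_nonneg (w ⬝ᵥ v l))).1 hw l (mem_univ l)
    simpa [(sub_pos.2 (hlt l hl)).ne'] using hterm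
  conv_lhs => rw [eq_sum_dotProduct_smul_of_orthonormal horth w]
  exact sum_eq_single k₀ (fun l _ hl => by simp [hcoeff l hl]) (by simp)

end Orthonormal

section RandomWalk

variable {ι : Type*} {A B : Matrix ι ι ℝ} {d : ι → ℝ}

theorem transition_eq_sqrt_mul_div (hdpos : ∀ i, 0 < d i)
    (hB : ∀ i j, B i j = A i j / (√(d i) * √(d j))) (i j : ι) :
    A i j / d i = √(d j) * B i j / √(d i) := by
  have hsi := Real.sqrt_pos.2 (hdpos i)
  have hsj := Real.sqrt_pos.2 (hdpos j)
  rw [hB]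
  field_simp
  rw [Real.sq_sqrt (hdpos i).le, mul_div_cancel_right₀ _ (hdpos i).ne']

variable [Fintype ι]

theorem sum_transition_mul_div_sqrt {lam : ι → ℝ} {v : ι → ι → ℝ} (hdpos : ∀ i, 0 < d i)
    (hB : ∀ i j, B i j = A i j / (√(d i) * √(d j)))
    (heig : ∀ k, B.mulVec (v k) = lam k • v k) (i k : ι) :
    ∑ x, A i x / d i * (v k x / √(d x)) = lam k * (v k i / √(d i)) := by
  have hsum := congrFun (heig k) i
  simp only [mulVec, dotProduct, Pi.smul_apply, smul_eq_mul] at hsum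
  rw [mul_div_assoc', ← hsum, sum_div]
  refine sum_congr rfl fun x _ => ?_
  rw [transition_eq_sqrt_mul_div hdpos hB]
  field_simp [(Real.sqrt_pos.2 (hdpos x)).ne']

theorem sum_mulVec_sqrt_mul (hdpos : ∀ i, 0 < d i)
    (hB : ∀ i j, B i j = A i j / (√(d i) * √(d j))) (g : ι → ℝ) (i : ι) :
    (B *ᵥ fun x => √(d x) * g x) i = √(d i) * ∑ x, A i x / d i * g x := by
  simp only [mulVec, dotProduct, mul_sum]
  refine sum_congr rfl fun x _ => ?_
  rw [transition_eq_sqrt_mul_div hdpos hB]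
  field_simp [(Real.sqrt_pos.2 (hdpos i)).ne']

theorem eq_zero_of_harmonic_off [DecidableEq ι] {lam : ι → ℝ} {v : ι → ι → ℝ} {k₀ j : ι}
    {g : ι → ℝ}
    (hdpos : ∀ i, 0 < d i) (hB : ∀ i j, B i j = A i j / (√(d i) * √(d j)))
    (horth : ∀ k l, ∑ x, v k x * v l x = if k = l then (1 : ℝ) else 0)
    (heig : ∀ k, B.mulVec (v k) = lam k • v k) (hle : ∀ k, lam k ≤ 1)
    (hlt : ∀ k ≠ k₀, lam k < 1) (hv₀ : v k₀ j ≠ 0)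
    (hgj : g j = 0) (hharm : ∀ i ≠ j, g i = ∑ x, A i x / d i * g x) :
    g = 0 := by
  set w : ι → ℝ := fun x => √(d x) * g x
  have hquad : w ⬝ᵥ (w - B *ᵥ w) = 0 := by
    refine sum_eq_zero fun i _ => ?_
    rcases eq_or_ne i j with rfl | hij
    · simp [w, hgj]
    · simp [w, sum_mulVec_sqrt_mul hdpos hB, ← hharm i hij]
  have hwv := eq_dotProduct_smul_of_dotProduct_sub_mulVec_eq_zero horth heig hle hlt hquad
  have hc : w ⬝ᵥ v k₀ = 0 := by
    simpa [hv₀, w, hgj] using (congrFun hwv j).symm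
  rw [hc, zero_smul] at hwv
  ext x
  simpa [(Real.sqrt_pos.2 (hdpos x)).ne', w] using congrFun hwv x

end RandomWalk

section SpectralFormula

variable {ι : Type*} [Fintype ι] [DecidableEq ι]

noncomputable def spectralHittingTime (twoE : ℝ) (d lam : ι → ℝ) (v : ι → ι → ℝ)
    (k₀ i j : ι) : ℝ :=
  twoE * ∑ k ∈ univ.erase k₀,
    1 / (1 - lam k) * (v k j / √(d j) * (v k j / √(d j) - v k i / √(d i)))

variable {twoE : ℝ} {d lam : ι → ℝ} {v : ι → ι → ℝ} {k₀ : ι}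

@[simp]
theorem spectralHittingTime_self (j : ι) : spectralHittingTime twoE d lam v k₀ j j = 0 := by
  simp [spectralHittingTime]

theorem spectralHittingTime_eq_one_add {A B : Matrix ι ι ℝ} (hd : ∀ i, d i = ∑ j, A i j)
    (hdpos : ∀ i, 0 < d i) (hB : ∀ i j, B i j = A i j / (√(d i) * √(d j)))
    (horth : ∀ k l, ∑ x, v k x * v l x = if k = l then (1 : ℝ) else 0)
    (heig : ∀ k, B.mulVec (v k) = lam k • v k) (hgap : ∀ k ≠ k₀, lam k ≠ 1)
    (hv₀ : ∀ j, v k₀ j = √(d j / twoE)) (htwoE : 0 < twoE) {i j : ι} (hij : i ≠ j) :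
    spectralHittingTime twoE d lam v k₀ i j
      = 1 + ∑ x, A i x / d i * spectralHittingTime twoE d lam v k₀ x j := by
  set ψ : ι → ι → ℝ := fun k x => v k x / √(d x) with hψ
  have hrow : ∑ x, A i x / d i = 1 := by
    rw [← sum_div, ← hd, div_self (hdpos i).ne']
  have hmean : ∑ x, A i x / d i * spectralHittingTime twoE d lam v k₀ x j
      = twoE * ∑ k ∈ univ.erase k₀,
          1 / (1 - lam k) * (ψ k j * (ψ k j - lam k * ψ k i)) := by
    simp only [spectralHittingTime, mul_sum]
    rw [sum_comm]
    refine sum_congr rfl fun k _ => ?_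
    have hstep := sum_transition_mul_div_sqrt hdpos hB heig i k
    calc ∑ x, A i x / d i * (twoE * (1 / (1 - lam k) * (ψ k j * (ψ k j - ψ k x))))
        = ∑ x, twoE * (1 / (1 - lam k)) * ψ k j
            * (ψ k j * (A i x / d i) - A i x / d i * ψ k x) :=
          sum_congr rfl fun x _ => by ring
      _ = twoE * (1 / (1 - lam k)) * ψ k j
            * (ψ k j * ∑ x, A i x / d i - ∑ x, A i x / d i * ψ k x) := by
          rw [← mul_sum, sum_sub_distrib, ← mul_sum]
      _ = _ := by rw [hrow, hstep]; ring
  have hcompl : ∑ k ∈ univ.erase k₀, v k i * v k j = -(v k₀ i * v k₀ j) := by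
    have := sum_erase_add univ (fun k => v k i * v k j) (mem_univ k₀)
    rw [sum_mul_eq_ite_of_orthonormal_rows horth, if_neg hij] at this
    linarith
  have hsi := Real.sqrt_pos.2 (hdpos i)
  have hsj := Real.sqrt_pos.2 (hdpos j)
  have hv₀prod : v k₀ i * v k₀ j = √(d i) * √(d j) / twoE := by
    rw [hv₀, hv₀, Real.sqrt_div (hdpos i).le, Real.sqrt_div (hdpos j).le, div_mul_div_comm,
      Real.mul_self_sqrt htwoE.le]
  suffices spectralHittingTime twoE d lam v k₀ i j
      - ∑ x, A i x / d i * spectralHittingTime twoE d lam v k₀ x j = 1 by linarith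
  calc spectralHittingTime twoE d lam v k₀ i j
        - ∑ x, A i x / d i * spectralHittingTime twoE d lam v k₀ x j
      = -(twoE / (√(d i) * √(d j))) * ∑ k ∈ univ.erase k₀, v k i * v k j := by
        rw [hmean, spectralHittingTime, ← mul_sub, ← sum_sub_distrib, mul_sum, mul_sum]
        refine sum_congr rfl fun k hk => ?_
        have hk : 1 - lam k ≠ 0 := sub_ne_zero.2 (hgap k (ne_of_mem_erase hk)).symm
        simp only [hψ]
        field_simp
        ring
    _ = 1 := by
        rw [hcompl, hv₀prod]
        field_simp

theorem eq_spectralHittingTime {A B : Matrix ι ι ℝ} (hd : ∀ i, d i = ∑ j, A i j)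
    (hdpos : ∀ i, 0 < d i) (hB : ∀ i j, B i j = A i j / (√(d i) * √(d j)))
    (horth : ∀ k l, ∑ x, v k x * v l x = if k = l then (1 : ℝ) else 0)
    (heig : ∀ k, B.mulVec (v k) = lam k • v k) (hle : ∀ k, lam k ≤ 1)
    (hlt : ∀ k ≠ k₀, lam k < 1) (hv₀ : ∀ j, v k₀ j = √(d j / twoE)) (htwoE : 0 < twoE)
    {H : ι → ι → ℝ} (hH0 : ∀ j, H j j = 0)
    (hHrec : ∀ i j, i ≠ j → H i j = 1 + ∑ k, (A i k / d i) * H k j) (i j : ι) :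
    H i j = spectralHittingTime twoE d lam v k₀ i j := by
  have hv₀j : v k₀ j ≠ 0 := by
    rw [hv₀]
    exact (Real.sqrt_pos.2 (div_pos (hdpos j) htwoE)).ne'
  have hdiff := eq_zero_of_harmonic_off
    (g := fun x => H x j - spectralHittingTime twoE d lam v k₀ x j)
    hdpos hB horth heig hle hlt hv₀j (by simp [hH0]) fun x hxj => by
      rw [hHrec x j hxj, spectralHittingTime_eq_one_add hd hdpos hB horth heig
        (fun k hk => (hlt k hk).ne) hv₀ htwoE hxj]
      simp only [mul_sub, sum_sub_distrib]
      ring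
  exact sub_eq_zero.1 (congrFun hdiff i)

end SpectralFormula

/-- The commute time κ(i,j) := H_{ij} + H_{ji} satisfies κ(i,j) = 2|E| · ∑_{k=2}^n (1/(1 − λ_k)) · ( v_{k,i}/√d_i − v_{k,j}/√d_j )². -/
theorem stmt_11
    (n : ℕ) (hn : 2 ≤ n)
    (A : Matrix (Fin n) (Fin n) ℝ)
    (d : Fin n → ℝ) (hd : ∀ i, d i = ∑ j, A i j)
    (hdpos : ∀ i, 0 < d i)
    (twoE : ℝ) (htwoE : twoE = ∑ i, d i)
    (B : Matrix (Fin n) (Fin n) ℝ)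
    (hB : ∀ i j, B i j = A i j / (Real.sqrt (d i) * Real.sqrt (d j)))
    (lam : Fin n → ℝ) (v : Fin n → Fin n → ℝ)
    (hmono : Antitone lam)
    (hlam1 : lam ⟨0, by omega⟩ = 1)
    (heig : ∀ k, B.mulVec (v k) = lam k • v k)
    (horth : ∀ k l, (∑ x, v k x * v l x) = (if k = l then (1 : ℝ) else 0))
    (hv1 : ∀ j, v ⟨0, by omega⟩ j = Real.sqrt (d j / twoE))
    (hgap : lam ⟨1, by omega⟩ < 1)
    (H : Fin n → Fin n → ℝ)
    (hH0 : ∀ j, H j j = 0)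
    (hHrec : ∀ i j, i ≠ j → H i j = 1 + ∑ k, (A i k / d i) * H k j) :
    ∀ i j, H i j + H j i = twoE * ∑ k ∈ Finset.univ.filter (fun k : Fin n => k.val ≠ 0),
      (1 / (1 - lam k)) * (v k i / Real.sqrt (d i) - v k j / Real.sqrt (d j)) ^ 2 := by
  set k₀ : Fin n := ⟨0, by omega⟩
  have htwoE_pos : 0 < twoE := htwoE ▸ sum_pos (fun i _ => hdpos i) ⟨k₀, mem_univ k₀⟩
  have hle : ∀ k, lam k ≤ 1 := fun k => hlam1 ▸ hmono (Fin.le_def.2 k.val.zero_le)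
  have hlt : ∀ k ≠ k₀, lam k < 1 := fun k hk =>
    (hmono (Fin.le_def.2 (Nat.one_le_iff_ne_zero.2 (Fin.val_ne_iff.2 hk)))).trans_lt hgap
  have hS : univ.filter (fun k : Fin n => k.val ≠ 0) = univ.erase k₀ := by
    ext k
    simp [k₀, Fin.ext_iff]
  intro i j
  rw [eq_spectralHittingTime hd hdpos hB horth heig hle hlt hv1 htwoE_pos hH0 hHrec,
    eq_spectralHittingTime hd hdpos hB horth heig hle hlt hv1 htwoE_pos hH0 hHrec,
    spectralHittingTime, spectralHittingTime, ← mul_add, ← sum_add_distrib, hS]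
  congr 1
  exact sum_congr rfl fun k _ => by ring
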